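/- For every $\ell\in\{1,\dots,m\}$ one has $\varphi'_\mathbf{i}(\partial_\mathbf{i}\varepsilon_\ell)=-\varepsilon_\ell-\sum_{k=1}^{\ell-1}(w_k^\vee\alpha_{i_k}^\vee,\ w_\ell\alpha_{i_\ell})\,\varepsilon_k$. -/

import Mathlib

open Finset

/-- The weight lattice `𝒫`: the free abelian group with basis `{αᵢ, ωᵢ : i ∈ I}`,
represented by pairs of coefficient vectors (first component: coefficients of the `αᵢ`,
second component: coefficients of the `ωᵢ`). -/
abbrev PLat (n : ℕ) := (Fin n → ℤ) × (Fin n → ℤ)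

/-- The coroot lattice `𝒬^∨`: the free abelian group with basis `{αᵢ^∨ : i ∈ I}`,
represented by coefficient vectors. -/
abbrev QvLat (n : ℕ) := Fin n → ℤ

variable {n : ℕ}

/-- The basis element `α_j^∨` of `𝒬^∨`. -/
def coroot (j : Fin n) : QvLat n := fun k => if k = j then 1 else 0

/-- The basis element `α_j` of `𝒫`. -/
def alP (j : Fin n) : PLat n := (fun k => if k = j then 1 else 0, 0)

/-- The basis element `ω_j` of `𝒫`. -/
def omP (j : Fin n) : PLat n := (0, fun k => if k = j then 1 else 0)

/-- The biadditive pairing `𝒬^∨ × 𝒫 → ℤ` with `(αᵢ^∨, α_j) = a_{ij}` and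
`(αᵢ^∨, ω_j) = δ_{ij}`. -/
def pairQP (A : Fin n → Fin n → ℤ) (x : QvLat n) (lam : PLat n) : ℤ :=
  (∑ a, ∑ b, x a * A a b * lam.1 b) + ∑ a, x a * lam.2 a

/-- The simple reflection `sᵢ` on `𝒫`: `sᵢ α_j = α_j - a_{ij} αᵢ`,
`sᵢ ω_j = ω_j - δ_{ij} αᵢ`. -/
def sP (A : Fin n → Fin n → ℤ) (a : Fin n) (lam : PLat n) : PLat n :=
  (fun j => if j = a then lam.1 a - ((∑ k, A a k * lam.1 k) + lam.2 a) else lam.1 j,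
   lam.2)

/-- The simple reflection `sᵢ^∨` on `𝒬^∨`: `sᵢ^∨ α_j^∨ = α_j^∨ - a_{ji} αᵢ^∨`. -/
def sQ (A : Fin n → Fin n → ℤ) (a : Fin n) (x : QvLat n) : QvLat n :=
  fun j => if j = a then x a - ∑ k, A k a * x k else x j

/-- `w_ℓ = s_{i₁} ∘ ⋯ ∘ s_{i_ℓ}` on `𝒫` (with `w₀ = id`). -/
def wP (A : Fin n → Fin n → ℤ) (ii : ℕ → Fin n) : ℕ → PLat n → PLat n
  | 0 => id
  | (l+1) => wP A ii l ∘ sP A (ii (l+1))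

/-- `w_ℓ^∨ = s_{i₁}^∨ ∘ ⋯ ∘ s_{i_ℓ}^∨` on `𝒬^∨` (with `w₀ = id`). -/
def wQ (A : Fin n → Fin n → ℤ) (ii : ℕ → Fin n) : ℕ → QvLat n → QvLat n
  | 0 => id
  | (l+1) => wQ A ii l ∘ sQ A (ii (l+1))

/-- `k⁺ = min({ℓ : k < ℓ ≤ m, i_ℓ = i_k} ∪ {m+1})`. -/
noncomputable def kplus (ii : ℕ → Fin n) (m k : ℕ) : ℕ :=
  sInf ({l | k < l ∧ l ≤ m ∧ ii l = ii k} ∪ {m+1})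

/-- `k⁻ = max({ℓ : 1 ≤ ℓ < k, i_ℓ = i_k} ∪ {0})`. -/
noncomputable def kminus (ii : ℕ → Fin n) (k : ℕ) : ℕ :=
  sSup ({l | 1 ≤ l ∧ l < k ∧ ii l = ii k} ∪ {0})

/-- The standard basis vector `ε_k` of `ℤ^m` (1-based index), with the convention
`ε_s = 0` for `s ∉ {1,…,m}`. -/
def eps (m k : ℕ) : Fin m → ℤ := fun j => if (j : ℕ) + 1 = k then 1 else 0

/-- `φ_𝐢(ε_k) = -ε_k - ε_{k⁻} - ∑_{ℓ : ℓ < k < ℓ⁺} a_{i_ℓ i_k} ε_ℓ`. -/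
noncomputable def phiE (A : Fin n → Fin n → ℤ) (ii : ℕ → Fin n) (m k : ℕ) :
    Fin m → ℤ :=
  -(eps m k) - eps m (kminus ii k)
    - ∑ l : Fin m, (if (l:ℕ)+1 < k ∧ k < kplus ii m ((l:ℕ)+1)
        then A (ii ((l:ℕ)+1)) (ii k) else 0) • eps m ((l:ℕ)+1)

/-- The endomorphism `φ_𝐢` of `ℤ^m`, extended additively from its values on the basis. -/
noncomputable def phiMap (A : Fin n → Fin n → ℤ) (ii : ℕ → Fin n) (m : ℕ)
    (v : Fin m → ℤ) : Fin m → ℤ :=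
  ∑ k : Fin m, v k • phiE A ii m ((k:ℕ)+1)

/-- `φ'_𝐢(ε_ℓ) = -∑_{k=1}^{ℓ} (w_k^∨ α_{i_k}^∨, w_ℓ ω_{i_ℓ}) ε_k`. -/
def phiE' (A : Fin n → Fin n → ℤ) (ii : ℕ → Fin n) (m l : ℕ) : Fin m → ℤ :=
  -∑ k : Fin m, (if (k:ℕ)+1 ≤ l then
      pairQP A (wQ A ii ((k:ℕ)+1) (coroot (ii ((k:ℕ)+1)))) (wP A ii l (omP (ii l)))
    else 0) • eps m ((k:ℕ)+1)

/-- The endomorphism `φ'_𝐢` of `ℤ^m`, extended additively from its values on the basis. -/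
def phiMap' (A : Fin n → Fin n → ℤ) (ii : ℕ → Fin n) (m : ℕ)
    (v : Fin m → ℤ) : Fin m → ℤ :=
  ∑ l : Fin m, v l • phiE' A ii m ((l:ℕ)+1)

/-- `∂_𝐢 ε_k = ε_k - ε_{k⁻}`. -/
noncomputable def derE (ii : ℕ → Fin n) (m k : ℕ) : Fin m → ℤ :=
  eps m k - eps m (kminus ii k)

/-- The endomorphism `∂_𝐢` of `ℤ^m`. -/
noncomputable def derMap (ii : ℕ → Fin n) (m : ℕ) (v : Fin m → ℤ) : Fin m → ℤ :=
  ∑ k : Fin m, v k • derE ii m ((k:ℕ)+1)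

/-- `∫_𝐢 ε_k = ε_k + ε_{k⁻} + ε_{(k⁻)⁻} + ⋯` (summing along the chain `k > k⁻ > ⋯ > 0`). -/
noncomputable def intE (ii : ℕ → Fin n) (m : ℕ) (k : ℕ) : Fin m → ℤ :=
  if h : kminus ii k < k then eps m k + intE ii m (kminus ii k) else eps m k
termination_by k
decreasing_by exact h

/-- The endomorphism `∫_𝐢` of `ℤ^m`. -/
noncomputable def intMap (ii : ℕ → Fin n) (m : ℕ) (v : Fin m → ℤ) : Fin m → ℤ :=
  ∑ k : Fin m, v k • intE ii m ((k:ℕ)+1)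

/-- The skew-symmetric biadditive form `Λ_𝐢` on `ℤ^m` with
`Λ_𝐢(ε_k, ε_ℓ) = sgn(k-ℓ) c_{i_k i_ℓ}` where `c_{ij} = dᵢ a_{ij}`. -/
def LamF (A : Fin n → Fin n → ℤ) (d : Fin n → ℤ) (ii : ℕ → Fin n) (m : ℕ)
    (a b : Fin m → ℤ) : ℤ :=
  ∑ k : Fin m, ∑ l : Fin m, a k * b l *
    ((((k:ℕ):ℤ) - ((l:ℕ):ℤ)).sign *
      (d (ii ((k:ℕ)+1)) * A (ii ((k:ℕ)+1)) (ii ((l:ℕ)+1))))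

/-- The biadditive form `Φ_𝐢` on `ℤ^m` with `Φ_𝐢(ε_k,ε_ℓ) = -d_{i_k}` if `k = ℓ`,
`= -c_{i_ℓ i_k}` if `ℓ < k`, and `= 0` if `ℓ > k`. -/
def PhiF (A : Fin n → Fin n → ℤ) (d : Fin n → ℤ) (ii : ℕ → Fin n) (m : ℕ)
    (a b : Fin m → ℤ) : ℤ :=
  ∑ k : Fin m, ∑ l : Fin m, a k * b l *
    (if (k:ℕ) = (l:ℕ) then -(d (ii ((k:ℕ)+1)))
     else if (l:ℕ) < (k:ℕ) then
       -(d (ii ((l:ℕ)+1)) * A (ii ((l:ℕ)+1)) (ii ((k:ℕ)+1)))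
     else 0)

/-- The entry `b_{pk}` of the exchange matrix `B̃_𝐢`. -/
noncomputable def bcoef (A : Fin n → Fin n → ℤ) (ii : ℕ → Fin n) (m p k : ℕ) : ℤ :=
  if p = kminus ii k then -1
  else if p < k ∧ k < kplus ii m p ∧ kplus ii m p < kplus ii m k then
    -(A (ii p) (ii k))
  else if k < p ∧ p < kplus ii m k ∧ kplus ii m k < kplus ii m p then
    A (ii p) (ii k)
  else if p = kplus ii m k then 1
  else 0

/-- The column `𝐛^k = ∑_p b_{pk} ε_p ∈ ℤ^m` of the exchange matrix. -/
noncomputable def bvec (A : Fin n → Fin n → ℤ) (ii : ℕ → Fin n) (m k : ℕ) :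
    Fin m → ℤ :=
  fun p => bcoef A ii m ((p:ℕ)+1) k

/-- `ρ_𝐢⁺(ε_k) = ε_k + ∑_{ℓ<k, ℓ⁺=m+1} a_{i_ℓ i_k} ε_ℓ`. -/
noncomputable def rhoPE (A : Fin n → Fin n → ℤ) (ii : ℕ → Fin n) (m k : ℕ) :
    Fin m → ℤ :=
  eps m k + ∑ l : Fin m, (if (l:ℕ)+1 < k ∧ kplus ii m ((l:ℕ)+1) = m+1
      then A (ii ((l:ℕ)+1)) (ii k) else 0) • eps m ((l:ℕ)+1)

/-- `ρ_𝐢⁻(ε_k) = ε_k - ∑_{ℓ≤k, ℓ⁺=m+1} a_{i_ℓ i_k} ε_ℓ`. -/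
noncomputable def rhoME (A : Fin n → Fin n → ℤ) (ii : ℕ → Fin n) (m k : ℕ) :
    Fin m → ℤ :=
  eps m k - ∑ l : Fin m, (if (l:ℕ)+1 ≤ k ∧ kplus ii m ((l:ℕ)+1) = m+1
      then A (ii ((l:ℕ)+1)) (ii k) else 0) • eps m ((l:ℕ)+1)

/-- The endomorphism `ρ_𝐢⁺` of `ℤ^m`. -/
noncomputable def rhoPMap (A : Fin n → Fin n → ℤ) (ii : ℕ → Fin n) (m : ℕ)
    (v : Fin m → ℤ) : Fin m → ℤ :=
  ∑ k : Fin m, v k • rhoPE A ii m ((k:ℕ)+1)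

/-- The endomorphism `ρ_𝐢⁻` of `ℤ^m`. -/
noncomputable def rhoMMap (A : Fin n → Fin n → ℤ) (ii : ℕ → Fin n) (m : ℕ)
    (v : Fin m → ℤ) : Fin m → ℤ :=
  ∑ k : Fin m, v k • rhoME A ii m ((k:ℕ)+1)

/-- `𝐚_λ = -∑_{k=1}^m (w_k^∨ α_{i_k}^∨, w_m λ) ε_k ∈ ℤ^m`. -/
def avec (A : Fin n → Fin n → ℤ) (ii : ℕ → Fin n) (m : ℕ) (lam : PLat n) :
    Fin m → ℤ :=
  fun k => -(pairQP A (wQ A ii ((k:ℕ)+1) (coroot (ii ((k:ℕ)+1)))) (wP A ii m lam))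

/-- `|𝐚| = ∑_{k=1}^m a_k α_{i_k} ∈ 𝒬 ⊆ 𝒫`. -/
def degP (ii : ℕ → Fin n) (m : ℕ) (a : Fin m → ℤ) : PLat n :=
  (fun j => ∑ k : Fin m, if ii ((k:ℕ)+1) = j then a k else 0, 0)

/-- The pairing `(μ, λ) = ∑ mᵢ dᵢ (αᵢ^∨, λ)` for `μ = ∑ mᵢ αᵢ ∈ 𝒬` and `λ ∈ 𝒫`
(induced by identifying `αᵢ` with `dᵢ αᵢ^∨`). -/
def pairAl (A : Fin n → Fin n → ℤ) (d : Fin n → ℤ) (mu lam : PLat n) : ℤ :=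
  ∑ j, mu.1 j * (d j * pairQP A (coroot j) lam)

/-!
Write `β_k = w_k^∨ α_{i_k}^∨`. Since `s_i ω_i = ω_i - α_i` and `s_i α_i = -α_i`, one has
`w_ℓ ω_{i_ℓ} = w_{ℓ-1} ω_{i_ℓ} + w_ℓ α_{i_ℓ}`, and `w_{ℓ-1} ω_{i_ℓ} = w_{ℓ⁻} ω_{i_ℓ}` because the
reflections `s_{i_t}`, `ℓ⁻ < t < ℓ`, fix `ω_{i_ℓ}`. Pair with `β_k` and use the invariance
`(w_k^∨ x, w_k λ) = (x, λ)`: for `k ≤ ℓ⁻` the `ω`-terms of `φ'(ε_ℓ)` and `φ'(ε_{ℓ⁻})` cancel,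
for `ℓ⁻ < k < ℓ` they vanish since `(β_k, w_k ω_{i_ℓ}) = (α_{i_k}^∨, ω_{i_ℓ}) = 0`, and for `k = ℓ`
the coefficient is `(α_{i_ℓ}^∨, ω_{i_ℓ}) = 1`.
-/

section Reflections

variable {n : ℕ} (A : Fin n → Fin n → ℤ)

lemma pairQP_add_right (x : QvLat n) (lam mu : PLat n) :
    pairQP A x (lam + mu) = pairQP A x lam + pairQP A x mu := by
  simp only [pairQP, Prod.fst_add, Prod.snd_add, Pi.add_apply, mul_add, Finset.sum_add_distrib]
  ring

lemma pairQP_coroot_omP (i j : Fin n) :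
    pairQP A (coroot i) (omP j) = if i = j then 1 else 0 := by
  simp [pairQP, coroot, omP, eq_comm]

lemma sP_add (a : Fin n) (lam mu : PLat n) :
    sP A a (lam + mu) = sP A a lam + sP A a mu := by
  refine Prod.ext (funext fun j => ?_) rfl
  simp only [sP, Prod.fst_add, Prod.snd_add, Pi.add_apply]
  split
  · simp only [mul_add, Finset.sum_add_distrib]
    ring
  · rfl

lemma sP_omP_self (a : Fin n) : sP A a (omP a) = omP a - alP a := by
  refine Prod.ext (funext fun j => ?_) (by simp [sP, alP])
  simp only [sP, omP, alP, Prod.fst_sub, Pi.sub_apply]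
  split <;> simp_all

lemma sP_omP_of_ne {a j : Fin n} (h : a ≠ j) : sP A a (omP j) = omP j := by
  refine Prod.ext (funext fun j' => ?_) rfl
  simp only [sP, omP]
  split <;> simp_all

lemma sP_alP_self {a : Fin n} (ha : A a a = 2) : sP A a (alP a) = -alP a := by
  refine Prod.ext (funext fun j => ?_) (by simp [sP, alP])
  simp only [sP, alP, Prod.fst_neg, Pi.neg_apply, mul_ite, mul_one, mul_zero,
    Finset.sum_ite_eq', Finset.mem_univ, if_true]
  split <;> simp_all

lemma pairQP_sQ_sP {a : Fin n} (ha : A a a = 2) (x : QvLat n) (lam : PLat n) :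
    pairQP A (sQ A a x) (sP A a lam) = pairQP A x lam := by
  set c := ∑ k, A k a * x k with hc
  set h := (∑ k, A a k * lam.1 k) + lam.2 a with hh
  have hsQ : sQ A a x = fun j => x j - if j = a then c else 0 := by
    funext j; by_cases hj : j = a <;> simp [sQ, hj, hc]
  have hsP : (sP A a lam).1 = fun j => lam.1 j - if j = a then h else 0 := by
    funext j; by_cases hj : j = a <;> simp [sP, hj, hh]
  have hcross : ∑ j, x j * A j a * h = c * h := by
    rw [Finset.sum_mul]
    exact Finset.sum_congr rfl fun j _ => by ring
  have hcorr : (∑ j, ∑ b, if j = a then c * A j b * lam.1 b else 0) = c * (h - lam.2 a) := by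
    rw [Finset.sum_comm]
    simp only [Finset.sum_ite_eq', Finset.mem_univ, if_true, Finset.mul_sum, c, h,
      add_sub_cancel_right]
    exact Finset.sum_congr rfl fun b _ => by ring
  rw [pairQP, hsQ, hsP, show (sP A a lam).2 = lam.2 from rfl]
  simp only [sub_mul, mul_sub, ite_mul, mul_ite, zero_mul, mul_zero,
    Finset.sum_sub_distrib, Finset.sum_ite_eq', Finset.mem_univ, if_true]
  rw [pairQP, hcross, hcorr, ha]
  ring

variable (ii : ℕ → Fin n)

lemma pairQP_wQ_wP (hA : ∀ i, A i i = 2) (l : ℕ) (x : QvLat n) (lam : PLat n) :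
    pairQP A (wQ A ii l x) (wP A ii l lam) = pairQP A x lam := by
  induction l generalizing x lam with
  | zero => rfl
  | succ l ih =>
    simp only [wQ, wP, Function.comp_apply, ih, pairQP_sQ_sP A (hA _)]

lemma wP_add (l : ℕ) (lam mu : PLat n) :
    wP A ii l (lam + mu) = wP A ii l lam + wP A ii l mu := by
  induction l generalizing lam mu with
  | zero => rfl
  | succ l ih => simp only [wP, Function.comp_apply, sP_add, ih]

lemma wP_succ_omP_self (hA : ∀ i, A i i = 2) (l : ℕ) :
    wP A ii (l + 1) (omP (ii (l + 1))) =
      wP A ii l (omP (ii (l + 1))) + wP A ii (l + 1) (alP (ii (l + 1))) := by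
  simp only [wP, Function.comp_apply, sP_omP_self, sP_alP_self A (hA _), sub_eq_add_neg, wP_add]

lemma wP_omP_eq_of_forall_ne {i : Fin n} {j j' : ℕ} (hjj' : j ≤ j')
    (hne : ∀ t, j < t → t ≤ j' → ii t ≠ i) : wP A ii j' (omP i) = wP A ii j (omP i) := by
  induction j', hjj' using Nat.le_induction with
  | base => rfl
  | succ j' hj ih =>
    rw [wP, Function.comp_apply, sP_omP_of_ne A (hne _ (by omega) le_rfl),
      ih fun t ht ht' => hne t ht (by omega)]

end Reflections

section Kminus

variable {n : ℕ} (ii : ℕ → Fin n) (l : ℕ)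

lemma bddAbove_kminus_set : BddAbove ({l' | 1 ≤ l' ∧ l' < l ∧ ii l' = ii l} ∪ {0}) :=
  ⟨l, by rintro x (hx | hx) <;> simp_all [le_of_lt]⟩

lemma kminus_mem : kminus ii l ∈ ({l' | 1 ≤ l' ∧ l' < l ∧ ii l' = ii l} ∪ {0}) :=
  Nat.sSup_mem ⟨0, Or.inr rfl⟩ (bddAbove_kminus_set ii l)

lemma kminus_lt (hl : 1 ≤ l) : kminus ii l < l := by
  rcases kminus_mem ii l with h | h
  · exact h.2.1
  · simp only [Set.mem_singleton_iff] at h; omega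

lemma ii_kminus (hp : 1 ≤ kminus ii l) : ii (kminus ii l) = ii l := by
  rcases kminus_mem ii l with h | h
  · exact h.2.2
  · simp only [Set.mem_singleton_iff] at h; omega

lemma ii_ne_of_kminus_lt {t : ℕ} (ht : kminus ii l < t) (ht' : t < l) : ii t ≠ ii l := fun he =>
  (le_csSup (bddAbove_kminus_set ii l) (Or.inl ⟨by omega, ht', he⟩)).not_gt ht

end Kminus

section Coefficients

variable {n : ℕ} (A : Fin n → Fin n → ℤ) (ii : ℕ → Fin n)

/-- Between `ℓ⁻` and `ℓ` the weight `w_t ω_{i_ℓ}` stays put, so its pairing with `β_k` is either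
the `ω`-coefficient of `φ'(ε_{ℓ⁻})` or, when `ℓ⁻ < k`, `(α_{i_k}^∨, ω_{i_ℓ}) = 0`. -/
lemma pairQP_wP_omP_succ (hA : ∀ i, A i i = 2) {k l : ℕ} (hk : 1 ≤ k) (hkl : k ≤ l) :
    pairQP A (wQ A ii k (coroot (ii k))) (wP A ii l (omP (ii (l + 1)))) =
      if k ≤ kminus ii (l + 1) then
        pairQP A (wQ A ii k (coroot (ii k)))
          (wP A ii (kminus ii (l + 1)) (omP (ii (kminus ii (l + 1)))))
      else 0 := by
  have hlm := kminus_lt ii (l + 1) (by omega)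
  split_ifs with hkm
  · rw [ii_kminus ii _ (by omega), wP_omP_eq_of_forall_ne A ii (by omega)
      fun t ht ht' => ii_ne_of_kminus_lt ii _ ht (by omega)]
  · rw [wP_omP_eq_of_forall_ne A ii (j := k) hkl
      fun t ht ht' => ii_ne_of_kminus_lt ii _ (by omega) (by omega),
      pairQP_wQ_wP A ii hA, pairQP_coroot_omP,
      if_neg (ii_ne_of_kminus_lt ii _ (by omega) (by omega))]

/-- The coefficient of `ε_k` in `φ'(ε_ℓ) - φ'(ε_{ℓ⁻})`. -/
lemma coeff_phiE'_sub_phiE'_kminus (hA : ∀ i, A i i = 2) {k l : ℕ} (hk : 1 ≤ k) (hl : 1 ≤ l) :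
    ((if k ≤ l then pairQP A (wQ A ii k (coroot (ii k))) (wP A ii l (omP (ii l))) else 0) -
      if k ≤ kminus ii l then
        pairQP A (wQ A ii k (coroot (ii k))) (wP A ii (kminus ii l) (omP (ii (kminus ii l))))
      else 0) =
      (if k = l then 1 else 0) +
        if k < l then pairQP A (wQ A ii k (coroot (ii k))) (wP A ii l (alP (ii l))) else 0 := by
  obtain ⟨l, rfl⟩ : ∃ l', l = l' + 1 := ⟨l - 1, by omega⟩
  have hlm := kminus_lt ii (l + 1) hl
  rcases lt_trichotomy k (l + 1) with hkl | rfl | hkl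
  · rw [wP_succ_omP_self A ii hA, pairQP_add_right, pairQP_wP_omP_succ A ii hA hk (by omega)]
    split_ifs <;> omega
  · rw [pairQP_wQ_wP A ii hA, pairQP_coroot_omP]
    simp only [le_refl, if_true, lt_irrefl, if_false, show ¬ l + 1 ≤ kminus ii (l + 1) by omega,
      sub_zero, add_zero]
  · simp only [show ¬ k ≤ l + 1 by omega, show ¬ k ≤ kminus ii (l + 1) by omega,
      show k ≠ l + 1 by omega, show ¬ k < l + 1 by omega, if_false]
    ring

end Coefficients

section StandardBasis

variable {m : ℕ}

lemma sum_smul_eps_apply (c : Fin m → ℤ) (j : Fin m) :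
    (∑ k : Fin m, c k • eps m ((k : ℕ) + 1)) j = c j := by
  simp [Finset.sum_apply, eps, Fin.val_inj]

lemma sum_eps_smul {M : Type*} [AddCommGroup M] {l : ℕ} (hl1 : 1 ≤ l) (hl2 : l ≤ m)
    (f : ℕ → M) : ∑ k : Fin m, eps m l k • f ((k : ℕ) + 1) = f l := by
  rw [Finset.sum_eq_single ⟨l - 1, by omega⟩]
  · simp [eps, show l - 1 + 1 = l by omega]
  · intro k _ hk
    simp [eps, show (k : ℕ) + 1 ≠ l from fun h => hk (Fin.ext (by simp; omega))]
  · simp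

end StandardBasis

section Maps

variable {n m : ℕ} (A : Fin n → Fin n → ℤ) (ii : ℕ → Fin n)

lemma derMap_eps {l : ℕ} (hl1 : 1 ≤ l) (hl2 : l ≤ m) :
    derMap ii m (eps m l) = eps m l - eps m (kminus ii l) :=
  sum_eps_smul hl1 hl2 (derE ii m)

lemma phiMap'_sub (v w : Fin m → ℤ) :
    phiMap' A ii m (v - w) = phiMap' A ii m v - phiMap' A ii m w := by
  simp only [phiMap', Pi.sub_apply, sub_smul, Finset.sum_sub_distrib]

lemma phiMap'_eps {l : ℕ} (hl : l ≤ m) : phiMap' A ii m (eps m l) = phiE' A ii m l := by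
  rcases Nat.eq_zero_or_pos l with rfl | hl1
  · simp [phiMap', phiE', eps]
  · exact sum_eps_smul hl1 hl _

end Maps

theorem phi'_der_eps_general {n m : ℕ}
    (A : Fin n → Fin n → ℤ)
    (hA : ∀ i, A i i = 2)
    (ii : ℕ → Fin n) (l : ℕ) (hl1 : 1 ≤ l) (hl2 : l ≤ m) :
    phiMap' A ii m (derMap ii m (eps m l)) =
      -(eps m l) - ∑ k : Fin m,
        (if (k:ℕ)+1 < l then
          pairQP A (wQ A ii ((k:ℕ)+1) (coroot (ii ((k:ℕ)+1)))) (wP A ii l (alP (ii l)))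
        else 0) • eps m ((k:ℕ)+1) := by
  rw [derMap_eps ii hl1 hl2, phiMap'_sub, phiMap'_eps A ii hl2,
    phiMap'_eps A ii ((kminus_lt ii l hl1).le.trans hl2)]
  funext j
  have hcoeff := coeff_phiE'_sub_phiE'_kminus A ii hA (k := (j : ℕ) + 1) (by omega) hl1
  simp only [phiE', Pi.sub_apply, Pi.neg_apply, sum_smul_eps_apply, eps] at hcoeff ⊢
  linarith

/-- `φ'_𝐢(∂_𝐢 ε_ℓ) = -ε_ℓ - ∑_{k=1}^{ℓ-1} (w_k^∨ α_{i_k}^∨, w_ℓ α_{i_ℓ}) ε_k`. -/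
theorem phi'_der_eps {n m : ℕ} (hm : 1 ≤ m)
    (A : Fin n → Fin n → ℤ) (d : Fin n → ℤ)
    (hA : ∀ i, A i i = 2) (hd : ∀ i, 0 < d i)
    (hsym : ∀ i j, d i * A i j = d j * A j i)
    (ii : ℕ → Fin n) (l : ℕ) (hl1 : 1 ≤ l) (hl2 : l ≤ m) :
    phiMap' A ii m (derMap ii m (eps m l)) =
      -(eps m l) - ∑ k : Fin m,
        (if (k:ℕ)+1 < l then
          pairQP A (wQ A ii ((k:ℕ)+1) (coroot (ii ((k:ℕ)+1)))) (wP A ii l (alP (ii l)))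
        else 0) • eps m ((k:ℕ)+1) :=
  phi'_der_eps_general A hA ii l hl1 hl2
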